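/- arXiv:1002.3363 — 5 statements merged into one kernel-verified Lean document; each statement's English description precedes it below -/
import Mathlib

section
/- Let mu > 2 be a real number and let F_mu : R -> R be the map F_mu(x) = mu - x^2. Then for every integer p >= 1, the set of real fixed points of the p-th iterate F_mu^p has exactly 2^p elements, and for every integer p >= 1 there exists a point of minimal period p (i.e., x with F_mu^p(x) = x and F_mu^q(x) != x for all 1 <= q < p). In particular F_mu has exponential periodic orbit growth. -/
/-!
For `μ > 2` let `β = (1 + √(1 + 4μ)) / 2`, so that `β² = μ + β` and `0 < β < μ`. The inverse
branches `y ↦ ±√(μ - y)` of `F` map `I = [-β, β]` into itself, and since `β < μ` their images lie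
in `(0, ∞)` and `(-∞, 0)` respectively. For every word `w` of length `p` in the two branches, the
composite of the branches listed in `w` is a continuous self-map of `I`, so it has a fixed point,
which is a fixed point of `Fᵖ` whose orbit visits the two halves of `I` in the order `w`. Distinct
words thus give distinct fixed points of `Fᵖ`, while `Fᵖ x - x` is a polynomial of degree `2ᵖ`.
The orbit of the point with word `(-, …, -, +)` visits `(0, ∞)` only at time `p - 1`, which rules out
every period `q < p`.
-/

open Set Function Polynomial

structure IsHorseshoe {α : Type*} [Preorder α] [TopologicalSpace α] (f : α → α)
    (g : Bool → α → α) (a b : α) : Prop where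
  le : a ≤ b
  continuousOn : ∀ i, ContinuousOn (g i) (Icc a b)
  mapsTo : ∀ i, MapsTo (g i) (Icc a b) (Icc a b)
  leftInvOn : ∀ i, LeftInvOn f (g i) (Icc a b)
  disjoint : Disjoint (g true '' Icc a b) (g false '' Icc a b)

def branchComp {α : Type*} (g : Bool → α → α) : List Bool → α → α
  | [], y => y
  | i :: l, y => g i (branchComp g l y)

namespace IsHorseshoe

section

variable {α : Type*} [Preorder α] [TopologicalSpace α] {f : α → α} {g : Bool → α → α} {a b : α}
  (h : IsHorseshoe f g a b)
include h

theorem mapsTo_branchComp (l : List Bool) : MapsTo (branchComp g l) (Icc a b) (Icc a b) := by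
  induction l with
  | nil => exact mapsTo_id _
  | cons i l ih => exact (h.mapsTo i).comp ih

theorem continuousOn_branchComp (l : List Bool) : ContinuousOn (branchComp g l) (Icc a b) := by
  induction l with
  | nil => exact continuousOn_id
  | cons i l ih => exact (h.continuousOn i).comp ih (h.mapsTo_branchComp l)

theorem iterate_branchComp {l : List Bool} {y : α} (hy : y ∈ Icc a b) {k : ℕ}
    (hk : k ≤ l.length) : f^[k] (branchComp g l y) = branchComp g (l.drop k) y := by
  induction l generalizing k with
  | nil => simp_all [branchComp]
  | cons i l ih =>
    cases k with
    | zero => rfl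
    | succ k =>
      rw [iterate_succ_apply, branchComp, h.leftInvOn i (h.mapsTo_branchComp l hy)]
      exact ih (by simpa using hk)

theorem iterate_length_eq {l : List Bool} {x : α} (hx : x ∈ Icc a b)
    (hfix : IsFixedPt (branchComp g l) x) : f^[l.length] x = x := by
  conv_lhs => rw [← hfix]
  rw [h.iterate_branchComp hx le_rfl, List.drop_length, branchComp]

theorem iterate_mem_image {l : List Bool} {x : α} (hx : x ∈ Icc a b)
    (hfix : IsFixedPt (branchComp g l) x) {k : ℕ} (hk : k < l.length) :
    f^[k] x ∈ g l[k] '' Icc a b := by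
  rw [← hfix.eq, h.iterate_branchComp hx hk.le, List.drop_eq_getElem_cons hk, branchComp]
  exact mem_image_of_mem _ (h.mapsTo_branchComp _ hx)

theorem eq_of_mem_image {i j : Bool} {z : α} (hi : z ∈ g i '' Icc a b)
    (hj : z ∈ g j '' Icc a b) : i = j := by
  cases i <;> cases j
  · rfl
  · exact absurd rfl (h.disjoint.ne_of_mem hj hi)
  · exact absurd rfl (h.disjoint.ne_of_mem hi hj)
  · rfl

end

variable {α : Type*} [ConditionallyCompleteLinearOrder α] [TopologicalSpace α] [OrderTopology α]
  [DenselyOrdered α] {f : α → α} {g : Bool → α → α} {a b : α} (h : IsHorseshoe f g a b)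
include h

theorem exists_isFixedPt_branchComp (l : List Bool) :
    ∃ x ∈ Icc a b, IsFixedPt (branchComp g l) x :=
  exists_mem_Icc_isFixedPt_of_mapsTo (h.continuousOn_branchComp l) h.le (h.mapsTo_branchComp l)

theorem two_pow_le_ncard (p : ℕ) (hfin : {x | f^[p] x = x}.Finite) :
    2 ^ p ≤ {x | f^[p] x = x}.ncard := by
  choose x hx hfix using fun w : Fin p → Bool => h.exists_isFixedPt_branchComp (List.ofFn w)
  have hinj : Injective x := by
    intro w w' hww'
    funext k
    have hk := h.iterate_mem_image (hx w) (hfix w) (l := List.ofFn w) (k := k) (by simp)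
    have hk' := h.iterate_mem_image (hx w') (hfix w') (l := List.ofFn w') (k := k) (by simp)
    rw [hww'] at hk
    simpa using h.eq_of_mem_image hk hk'
  have hperiodic : range x ⊆ {x | f^[p] x = x} := by
    rintro _ ⟨w, rfl⟩
    simpa using h.iterate_length_eq (hx w) (hfix w)
  calc 2 ^ p = Nat.card (Fin p → Bool) := by simp
    _ = (range x).ncard := by rw [← image_univ, ncard_image_of_injective _ hinj, ncard_univ]
    _ ≤ _ := ncard_le_ncard hperiodic hfin

theorem exists_minimalPeriod (p : ℕ) :
    ∃ x, f^[p] x = x ∧ ∀ q : ℕ, 1 ≤ q → q < p → f^[q] x ≠ x := by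
  let w : Fin p → Bool := fun k => decide ((k : ℕ) = p - 1)
  obtain ⟨x, hx, hfix⟩ := h.exists_isFixedPt_branchComp (List.ofFn w)
  refine ⟨x, by simpa using h.iterate_length_eq hx hfix, fun q hq hqp hperiodic => ?_⟩
  have hlast := h.iterate_mem_image hx hfix (k := p - 1) (by simp; omega)
  have hearlier := h.iterate_mem_image hx hfix (k := p - 1 - q) (by simp; omega)
  have hshift : f^[p - 1 - q] (f^[q] x) = f^[p - 1] x := by
    rw [← iterate_add_apply, Nat.sub_add_cancel (by omega : q ≤ p - 1)]
  rw [← hshift, hperiodic] at hlast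
  have := h.eq_of_mem_image hlast hearlier
  simp [w] at this
  omega

end IsHorseshoe

theorem Polynomial.finite_setOf_iterate_eval_eq_and_ncard_le {R : Type*} [CommRing R] [IsDomain R]
    (P : R[X]) (hP : 2 ≤ P.natDegree) {n : ℕ} (hn : n ≠ 0) :
    {x | (fun x => P.eval x)^[n] x = x}.Finite ∧
      {x | (fun x => P.eval x)^[n] x = x}.ncard ≤ P.natDegree ^ n := by
  set Q := P.comp^[n] X - X
  have hdeg : Q.natDegree = P.natDegree ^ n := by
    have : 1 < P.natDegree ^ n := Nat.one_lt_pow hn (by omega)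
    rw [natDegree_sub_eq_left_of_natDegree_lt] <;> simp [this]
  have hQ : Q ≠ 0 := ne_zero_of_natDegree_gt (n := 0) (by rw [hdeg]; positivity)
  have hroots : {x | (fun x => P.eval x)^[n] x = x} = Q.rootSet R := by
    ext x
    simp [Q, mem_rootSet, hQ, sub_eq_zero]
  rw [hroots, ← hdeg]
  exact ⟨rootSet_finite Q R, ncard_rootSet_le Q R⟩

section Quadratic

variable {μ : ℝ}

noncomputable def quadBranch (μ : ℝ) (i : Bool) (y : ℝ) : ℝ := if i then √(μ - y) else -√(μ - y)

theorem exists_sq_eq_add_self (hμ : 2 < μ) : ∃ β : ℝ, 0 < β ∧ β < μ ∧ β ^ 2 = μ + β := by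
  have hs := Real.sq_sqrt (by linarith : (0 : ℝ) ≤ 1 + 4 * μ)
  have hs₀ := Real.sqrt_nonneg (1 + 4 * μ)
  exact ⟨(1 + √(1 + 4 * μ)) / 2, by positivity, by nlinarith, by nlinarith⟩

theorem sqrt_sub_mem_Ioc {β y : ℝ} (hβμ : β < μ) (hβ : β ^ 2 = μ + β) (hy : y ∈ Icc (-β) β) :
    √(μ - y) ∈ Ioc 0 β :=
  ⟨Real.sqrt_pos.2 (by linarith [hy.2]),
    Real.sqrt_le_iff.2 ⟨by linarith [hy.1, hy.2], by nlinarith [hy.1]⟩⟩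

theorem isHorseshoe_quadBranch (hμ : 2 < μ) {F : ℝ → ℝ} (hF : ∀ x, F x = μ - x ^ 2) :
    ∃ a b, IsHorseshoe F (quadBranch μ) a b := by
  obtain ⟨β, hβ₀, hβμ, hβ⟩ := exists_sq_eq_add_self hμ
  refine ⟨-β, β, ⟨by linarith, fun i => ?_, fun i y hy => ?_, fun i y hy => ?_, ?_⟩⟩
  · exact (Continuous.if_const _ (by fun_prop) (by fun_prop)).continuousOn
  · have := sqrt_sub_mem_Ioc hβμ hβ hy
    cases i
    · exact ⟨neg_le_neg this.2, show -√(μ - y) ≤ β by linarith [this.1]⟩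
    · exact ⟨show -β ≤ √(μ - y) by linarith [this.1], this.2⟩
  · have := Real.sq_sqrt (by linarith [hy.2] : 0 ≤ μ - y)
    cases i <;> simp [quadBranch, hF, this]
  · refine (Ioi_disjoint_Iio_same (a := (0 : ℝ))).mono ?_ ?_ <;> rintro _ ⟨y, hy, rfl⟩
    · exact (sqrt_sub_mem_Ioc hβμ hβ hy).1
    · exact neg_neg_of_pos (sqrt_sub_mem_Ioc hβμ hβ hy).1

end Quadratic

/-- For `μ > 2` and `F x = μ - x²`: for every `p ≥ 1` the set of fixed points of the
`p`-th iterate `F^[p]` has exactly `2^p` elements, for every `p ≥ 1` there is a point of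
minimal period `p`, and in particular `F` has exponential periodic orbit growth. -/
theorem stmt_0 (μ : ℝ) (hμ : 2 < μ) (F : ℝ → ℝ) (hF : ∀ x, F x = μ - x ^ 2) :
    (∀ p : ℕ, 1 ≤ p →
      {x : ℝ | F^[p] x = x}.Finite ∧ {x : ℝ | F^[p] x = x}.ncard = 2 ^ p) ∧
    (∀ p : ℕ, 1 ≤ p →
      ∃ x : ℝ, F^[p] x = x ∧ ∀ q : ℕ, 1 ≤ q → q < p → F^[q] x ≠ x) ∧
    (∃ G : ℝ, 1 < G ∧
      {p : ℕ | G ^ p ≤ ({x : ℝ | F^[p] x = x}.ncard : ℝ)}.Infinite) := by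
  obtain ⟨a, b, hF_horseshoe⟩ := isHorseshoe_quadBranch hμ hF
  have hF_poly : F = fun x => (C μ - X ^ 2 : ℝ[X]).eval x := funext fun x => by simp [hF]
  have hdeg : (C μ - X ^ 2 : ℝ[X]).natDegree = 2 := by compute_degree!
  have hcard (p : ℕ) (hp : 1 ≤ p) :
      {x : ℝ | F^[p] x = x}.Finite ∧ {x : ℝ | F^[p] x = x}.ncard = 2 ^ p := by
    have hpoly := (C μ - X ^ 2 : ℝ[X]).finite_setOf_iterate_eval_eq_and_ncard_le hdeg.ge
      (n := p) (by omega)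
    rw [← hF_poly, hdeg] at hpoly
    obtain ⟨hfin, hle⟩ := hpoly
    exact ⟨hfin, le_antisymm hle (hF_horseshoe.two_pow_le_ncard p hfin)⟩
  refine ⟨hcard, fun p _ => hF_horseshoe.exists_minimalPeriod p, 2, one_lt_two,
    (Ici_infinite 1).mono fun p hp => ?_⟩
  simp [(hcard p hp).2]
end

section
/- Let beta >= 0 and let g : R x R -> R be continuously differentiable in x with |g(mu, x)| <= beta and |d g/d x (mu, x)| <= beta for all mu and x. If mu < -(1 + beta), then the map F_mu(x) = mu x - x^3 + g(mu, x) has exactly one fixed point x*, every periodic point of F_mu (of any period) equals x*, and the derivative F_mu'(x*) < -1. Hence F_mu has no regular periodic orbits for mu sufficiently negative: its unique periodic orbit is a flip orbit. -/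
/-!
The derivative `μ - 3x² + ∂ₓg` is everywhere below `μ + β < -1`, so `x ↦ F x + x` is strictly
decreasing and `F` strictly increases distances. An expanding map has at most one periodic point,
since `F^[p]` would strictly increase the distance between two `p`-periodic points.
A fixed point exists by the intermediate value theorem, because `F 1 < 1` and `F (-1) > -1`.
-/

open Function

def IsExpanding {α : Type*} [MetricSpace α] (f : α → α) : Prop :=
  ∀ x y, x ≠ y → dist x y < dist (f x) (f y)

namespace IsExpanding

variable {α : Type*} [MetricSpace α] {f g : α → α}

theorem comp (hf : IsExpanding f) (hg : IsExpanding g) : IsExpanding (f ∘ g) := by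
  intro x y hxy
  have hlt := hg x y hxy
  exact hlt.trans (hf _ _ (dist_pos.mp (dist_nonneg.trans_lt hlt)))

theorem iterate (hf : IsExpanding f) {n : ℕ} (hn : n ≠ 0) : IsExpanding f^[n] := by
  induction n with
  | zero => exact absurd rfl hn
  | succ m ih =>
    rcases eq_or_ne m 0 with rfl | hm
    · simpa using hf
    · rw [iterate_succ]
      exact (ih hm).comp hf

theorem eq_of_isPeriodicPt (hf : IsExpanding f) {n : ℕ} (hn : n ≠ 0) {x y : α}
    (hx : IsPeriodicPt f n x) (hy : IsPeriodicPt f n y) : x = y := by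
  by_contra hxy
  have := hf.iterate hn x y hxy
  rw [hx.eq, hy.eq] at this
  exact lt_irrefl _ this

end IsExpanding

theorem isExpanding_of_deriv_lt_neg_one {f : ℝ → ℝ} (hf : ∀ x, deriv f x < -1) :
    IsExpanding f := by
  have hdiff : Differentiable ℝ f := fun x =>
    differentiableAt_of_deriv_ne_zero (by linarith [hf x])
  have hanti : StrictAnti (f + id) := strictAnti_of_deriv_neg fun x => by
    rw [((hdiff x).hasDerivAt.add (hasDerivAt_id x)).deriv]
    linarith [hf x]
  intro x y hxy
  wlog hlt : x < y generalizing x y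
  · rw [dist_comm, dist_comm (f x)]
    exact this y x hxy.symm (hxy.lt_or_gt.resolve_left hlt)
  have hsum := hanti hlt
  simp only [Pi.add_apply, id] at hsum
  calc dist x y = y - x := by rw [dist_comm, Real.dist_eq, abs_of_pos (sub_pos.2 hlt)]
    _ < f x - f y := by linarith
    _ ≤ dist (f x) (f y) := (le_abs_self _).trans_eq (Real.dist_eq _ _).symm

section PerturbedCubic

variable {β μ : ℝ} {h : ℝ → ℝ}

theorem hasDerivAt_perturbedCubic {x : ℝ} (hh : DifferentiableAt ℝ h x) :
    HasDerivAt (fun x => μ * x - x ^ 3 + h x) (μ - 3 * x ^ 2 + deriv h x) x := by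
  have hlin : HasDerivAt (fun x : ℝ => μ * x) μ x := by
    simpa using (hasDerivAt_id x).const_mul μ
  have hcube : HasDerivAt (fun x : ℝ => x ^ 3) (3 * x ^ 2) x := by
    simpa using hasDerivAt_pow 3 x
  exact (hlin.sub hcube).add hh.hasDerivAt

theorem deriv_perturbedCubic_lt_neg_one (hh : Differentiable ℝ h) (hh' : ∀ x, |deriv h x| ≤ β)
    (hμ : μ < -(1 + β)) (x : ℝ) : deriv (fun x => μ * x - x ^ 3 + h x) x < -1 := by
  rw [(hasDerivAt_perturbedCubic (hh x)).deriv]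
  nlinarith [(abs_le.mp (hh' x)).2, sq_nonneg x]

theorem exists_isFixedPt_perturbedCubic (hh : Continuous h) (hbound : ∀ x, |h x| ≤ β)
    (hμ : μ < -(1 + β)) : ∃ x, IsFixedPt (fun x => μ * x - x ^ 3 + h x) x := by
  obtain ⟨x, -, hx⟩ := exists_mem_Icc_isFixedPt (a := -1) (b := 1)
    (by fun_prop : Continuous fun x => μ * x - x ^ 3 + h x).continuousOn (by norm_num)
    (by linarith [(abs_le.mp (hbound (-1))).1]) (by linarith [(abs_le.mp (hbound 1)).2])
  exact ⟨x, hx⟩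

end PerturbedCubic

theorem stmt_8_general (β : ℝ) (g : ℝ → ℝ → ℝ)
    (hgdiff : ∀ μ : ℝ, ContDiff ℝ 1 (g μ))
    (hg : ∀ μ x : ℝ, |g μ x| ≤ β) (hg' : ∀ μ x : ℝ, |deriv (g μ) x| ≤ β)
    (μ : ℝ) (hμ : μ < -(1 + β))
    (F : ℝ → ℝ) (hF : ∀ x, F x = μ * x - x ^ 3 + g μ x) :
    ∃ xstar : ℝ, F xstar = xstar ∧
      (∀ x : ℝ, F x = x → x = xstar) ∧
      (∀ (x : ℝ) (p : ℕ), 1 ≤ p → F^[p] x = x → x = xstar) ∧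
      deriv F xstar < -1 := by
  obtain rfl : F = fun x => μ * x - x ^ 3 + g μ x := funext hF
  have hgd : Differentiable ℝ (g μ) := (hgdiff μ).differentiable one_ne_zero
  have hderiv := deriv_perturbedCubic_lt_neg_one hgd (hg' μ) hμ
  have hexp := isExpanding_of_deriv_lt_neg_one hderiv
  obtain ⟨xstar, hfix⟩ := exists_isFixedPt_perturbedCubic hgd.continuous (hg μ) hμ
  have hperiodic (x : ℝ) (p : ℕ) (hp : 1 ≤ p) (hx : IsPeriodicPt _ p x) : x = xstar :=
    hexp.eq_of_isPeriodicPt (by omega) hx (hfix.isPeriodicPt p)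
  exact ⟨xstar, hfix, fun x hx => hperiodic x 1 le_rfl hx, hperiodic,
    hderiv xstar⟩

/-- Perturbed cubic family `F x = μx - x³ + g μ x`, with `g` continuously
differentiable in `x` and `|g μ x| ≤ β`, `|∂g/∂x (μ, x)| ≤ β`. If `μ < -(1 + β)`
then `F` has exactly one fixed point `x*`, every periodic point of `F` equals `x*`,
and `F'(x*) < -1`: the unique periodic orbit is a flip orbit, so there are no
regular periodic orbits. -/
theorem stmt_8 (β : ℝ) (hβ : 0 ≤ β) (g : ℝ → ℝ → ℝ)
    (hgdiff : ∀ μ : ℝ, ContDiff ℝ 1 (g μ))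
    (hg : ∀ μ x : ℝ, |g μ x| ≤ β) (hg' : ∀ μ x : ℝ, |deriv (g μ) x| ≤ β)
    (μ : ℝ) (hμ : μ < -(1 + β))
    (F : ℝ → ℝ) (hF : ∀ x, F x = μ * x - x ^ 3 + g μ x) :
    ∃ xstar : ℝ, F xstar = xstar ∧
      (∀ x : ℝ, F x = x → x = xstar) ∧
      (∀ (x : ℝ) (p : ℕ), 1 ≤ p → F^[p] x = x → x = xstar) ∧
      deriv F xstar < -1 :=
  stmt_8_general β g hgdiff hg hg' μ hμ F hF
end

section
/- Let beta >= 0 and let g : R x R -> R satisfy |g(mu, x)| <= beta for all mu and x. If mu >= beta + 1, then every periodic point x of the map x -> mu x - x^3 + g(mu, x) (of any period p >= 1) satisfies |x| <= 2 sqrt(mu). -/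
/-!
Outside the disc `|x| ≤ 2√μ` the cubic term dominates: there `|F x| > |x|`, because
`|x|(x² - μ) - β > |x|` once `x² > 4μ ≥ 4(β + 1)`. So an orbit that starts outside the disc
stays outside with strictly increasing modulus, and can never return to its starting point.
-/

open Function

theorem le_of_isPeriodicPt_of_lt_apply {α : Type*} {f : α → α} {v : α → ℝ} {r : ℝ}
    (hf : ∀ y, r < v y → v y < v (f y)) {x : α} {p : ℕ} (hp : 0 < p)
    (hx : IsPeriodicPt f p x) : v x ≤ r := by
  by_contra! hrx
  have hmono : ∀ n, v x ≤ v (f^[n] x) := by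
    intro n
    induction n with
    | zero => rfl
    | succ n ih =>
      rw [iterate_succ_apply']
      exact ih.trans (hf _ (hrx.trans_le ih)).le
  obtain ⟨n, rfl⟩ := Nat.exists_eq_add_one_of_ne_zero hp.ne'
  have hstep := hf _ (hrx.trans_le (hmono n))
  rw [← iterate_succ_apply' f n, hx.eq] at hstep
  exact (hmono n).not_gt hstep

theorem abs_lt_abs_cubic_add {β μ c y : ℝ} (hμ : β + 1 ≤ μ) (hc : |c| ≤ β)
    (hy : 2 * √μ < |y|) : |y| < |μ * y - y ^ 3 + c| := by
  have hβ : 0 ≤ β := (abs_nonneg c).trans hc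
  have hy2 : 4 * μ < |y| ^ 2 := by
    have := pow_lt_pow_left₀ hy (by positivity) two_ne_zero
    rw [mul_pow, Real.sq_sqrt (by linarith)] at this
    linarith
  have hy_two : 2 < |y| := by nlinarith [abs_nonneg y]
  have hcubic : |μ * y - y ^ 3| = |y| * (|y| ^ 2 - μ) := by
    rw [show μ * y - y ^ 3 = -(y * (y ^ 2 - μ)) by ring, abs_neg, abs_mul,
      abs_of_pos (by nlinarith [sq_abs y] : 0 < y ^ 2 - μ), sq_abs]
  calc |y| < |y| * (|y| ^ 2 - μ) - β := by nlinarith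
    _ ≤ |μ * y - y ^ 3| - |-c| := by rw [hcubic, abs_neg]; linarith
    _ ≤ |μ * y - y ^ 3 + c| := by simpa using abs_sub_abs_le_abs_sub (μ * y - y ^ 3) (-c)

theorem stmt_9_general (β : ℝ) (g : ℝ → ℝ → ℝ)
    (hg : ∀ μ x : ℝ, |g μ x| ≤ β) (μ : ℝ) (hμ : β + 1 ≤ μ)
    (F : ℝ → ℝ) (hF : ∀ x, F x = μ * x - x ^ 3 + g μ x)
    (x : ℝ) (p : ℕ) (hp : 1 ≤ p) (hfix : F^[p] x = x) :
    |x| ≤ 2 * Real.sqrt μ :=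
  le_of_isPeriodicPt_of_lt_apply (v := abs)
    (fun y hy => hF y ▸ abs_lt_abs_cubic_add hμ (hg μ y) hy) hp hfix

/-- Perturbed cubic family: if `|g μ x| ≤ β` for all `μ, x` and `μ ≥ β + 1`,
then every periodic point `x` (of any period `p ≥ 1`) of `x ↦ μx - x³ + g μ x`
satisfies `|x| ≤ 2√μ`. -/
theorem stmt_9 (β : ℝ) (hβ : 0 ≤ β) (g : ℝ → ℝ → ℝ)
    (hg : ∀ μ x : ℝ, |g μ x| ≤ β) (μ : ℝ) (hμ : β + 1 ≤ μ)
    (F : ℝ → ℝ) (hF : ∀ x, F x = μ * x - x ^ 3 + g μ x)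
    (x : ℝ) (p : ℕ) (hp : 1 ≤ p) (hfix : F^[p] x = x) :
    |x| ≤ 2 * Real.sqrt μ :=
  stmt_9_general β g hg μ hμ F hF x p hp hfix
end

section
/- Let beta >= 0 and let g : R x R -> R satisfy |g(mu, x)| <= beta for all mu and x. If mu >= beta + 2, then every periodic point x of the map x -> x^4 - 2 mu x^2 + mu^2/2 + g(mu, x) (of any period p >= 1) satisfies |x| <= 2 sqrt(mu). -/
/-! Where `x² > 4μ` the quartic term dominates: `F x > x²`, so this region is
forward invariant and `x²` strictly increases along orbits in it. An orbit that starts there can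
therefore never return to its starting point. -/

open Function Set

theorem Function.iterate_ne_self_of_mapsTo_of_lt {α : Type*} {f : α → α} {s : Set α}
    (hs : MapsTo f s s) {φ : α → ℝ} (hφ : ∀ y ∈ s, φ y < φ (f y)) {x : α} (hx : x ∈ s)
    {p : ℕ} (hp : 1 ≤ p) : f^[p] x ≠ x := by
  have hmono : StrictMono fun n => φ (f^[n] x) := strictMono_nat_of_lt_succ fun n => by
    simpa only [iterate_succ_apply'] using hφ _ (hs.iterate n hx)
  intro hfix
  simpa only [iterate_zero_apply, hfix, lt_self_iff_false] using hmono (by omega : 0 < p)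

theorem sq_lt_quartic_add {μ c y : ℝ} (hμ : 1 ≤ μ) (hc : 2 - μ ≤ c) (hy : 4 * μ < y ^ 2) :
    y ^ 2 < y ^ 4 - 2 * μ * y ^ 2 + μ ^ 2 / 2 + c := by
  nlinarith [mul_lt_mul_of_pos_right hy (by linarith : (0 : ℝ) < y ^ 2 - 2 * μ - 1)]

theorem stmt_11_general (β : ℝ) (g : ℝ → ℝ → ℝ)
    (hg : ∀ μ x : ℝ, |g μ x| ≤ β) (μ : ℝ) (hμ : β + 2 ≤ μ)
    (F : ℝ → ℝ) (hF : ∀ x, F x = x ^ 4 - 2 * μ * x ^ 2 + μ ^ 2 / 2 + g μ x)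
    (x : ℝ) (p : ℕ) (hp : 1 ≤ p) (hfix : F^[p] x = x) :
    |x| ≤ 2 * Real.sqrt μ := by
  have hμ1 : 1 ≤ μ := by linarith [(abs_nonneg _).trans (hg 0 0)]
  have hgrow : ∀ y, 4 * μ < y ^ 2 → y ^ 2 < F y := fun y hy =>
    hF y ▸ sq_lt_quartic_add hμ1 (by linarith [(abs_le.mp (hg μ y)).1]) hy
  have hescape : ∀ y, 4 * μ < y ^ 2 → 4 * μ < F y ^ 2 ∧ y ^ 2 < F y ^ 2 := fun y hy => by
    have := hgrow y hy
    constructor <;> nlinarith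
  have hx : x ^ 2 ≤ 4 * μ := by
    by_contra! hx
    exact iterate_ne_self_of_mapsTo_of_lt (s := {y | 4 * μ < y ^ 2}) (φ := (· ^ 2))
      (fun y hy => (hescape y hy).1) (fun y hy => (hescape y hy).2) hx hp hfix
  calc |x| ≤ Real.sqrt (2 ^ 2 * μ) := Real.abs_le_sqrt (by linarith)
    _ = 2 * Real.sqrt μ := by rw [Real.sqrt_mul (by norm_num), Real.sqrt_sq (by norm_num)]

/-- Perturbed quartic family: if `|g μ x| ≤ β` for all `μ, x` and `μ ≥ β + 2`,
then every periodic point `x` (of any period `p ≥ 1`) of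
`x ↦ x⁴ - 2μx² + μ²/2 + g μ x` satisfies `|x| ≤ 2√μ`. -/
theorem stmt_11 (β : ℝ) (hβ : 0 ≤ β) (g : ℝ → ℝ → ℝ)
    (hg : ∀ μ x : ℝ, |g μ x| ≤ β) (μ : ℝ) (hμ : β + 2 ≤ μ)
    (F : ℝ → ℝ) (hF : ∀ x, F x = x ^ 4 - 2 * μ * x ^ 2 + μ ^ 2 / 2 + g μ x)
    (x : ℝ) (p : ℕ) (hp : 1 ≤ p) (hfix : F^[p] x = x) :
    |x| ≤ 2 * Real.sqrt μ :=
  stmt_11_general β g hg μ hμ F hF x p hp hfix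
end

section
/- Let mu > 0 and F_mu(x) = mu - 2|x|. Then for every integer p >= 1: every periodic point of F_mu lies in [-mu, mu]; the p-th iterate F_mu^p has exactly 2^p fixed points; and there exists a point of minimal period p. In particular F_mu has periodic orbits of all periods and exponential periodic orbit growth for every mu > 0. -/
/-!
Writing `‖θ‖` for the distance from `θ` to `2ℤ`, the tent map `T u = 1 - |2u - 1|` satisfies
`T ‖θ‖ = ‖2θ‖`, so `T^[p] u = ‖2^p u‖` on `[0, 1]`, and `F` is conjugate to `T` by
`u ↦ μ (2u - 1)`. On each lap `[j / 2^p, (j + 1) / 2^p]` the iterate `T^[p]` is affine with slope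
`±2^p` onto `[0, 1]`, so it has exactly one fixed point there, namely `j / (2^p - 1)` for even `j`
and `(j + 1) / (2^p + 1)` for odd `j`; the fixed points thus correspond to the `2^p` laps. The point
`2 / (2^p + 1)` is doubled `p - 1` times without leaving `[0, 1]`, so its minimal period is `p`.
-/

open Set Function

noncomputable def tent (u : ℝ) : ℝ := 1 - |2 * u - 1|

local notation "𝕋" => AddCircle (2 : ℝ)

lemma tent_of_le_half {u : ℝ} (hu : u ≤ 1 / 2) : tent u = 2 * u := by
  rw [tent, abs_of_nonpos (by linarith)]
  ring

lemma tent_of_half_le {u : ℝ} (hu : 1 / 2 ≤ u) : tent u = 2 - 2 * u := by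
  rw [tent, abs_of_nonneg (by linarith)]
  ring

lemma tent_le_one (u : ℝ) : tent u ≤ 1 := by
  unfold tent
  linarith [abs_nonneg (2 * u - 1)]

lemma tent_iterate_of_nonpos {u : ℝ} (hu : u ≤ 0) (n : ℕ) : tent^[n] u = 2 ^ n * u := by
  induction n generalizing u with
  | zero => simp
  | succ n ih =>
    rw [iterate_succ_apply, tent_of_le_half (by linarith), ih (by linarith), pow_succ]
    ring

lemma mem_Icc_of_tent_iterate_eq {p : ℕ} (hp : 1 ≤ p) {u : ℝ} (hu : tent^[p] u = u) :
    u ∈ Icc (0 : ℝ) 1 := by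
  obtain ⟨m, rfl⟩ := Nat.exists_eq_add_of_le' hp
  constructor
  · by_contra! h
    have h2 := tent_iterate_of_nonpos h.le (m + 1)
    rw [hu, pow_succ] at h2
    nlinarith [one_le_pow₀ (M₀ := ℝ) one_le_two (n := m)]
  · rw [← hu, iterate_succ_apply']
    exact tent_le_one _

lemma AddCircle.coe_norm_eq_or_eq_neg {p : ℝ} (θ : AddCircle p) :
    (‖θ‖ : AddCircle p) = θ ∨ (‖θ‖ : AddCircle p) = -θ := by
  obtain ⟨x, rfl⟩ := QuotientAddGroup.mk_surjective θ
  have hx : ((x - round (p⁻¹ * x) * p : ℝ) : AddCircle p) = x := by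
    rw [AddCircle.coe_sub, ← zsmul_eq_mul, AddCircle.coe_zsmul, AddCircle.coe_period,
      smul_zero, sub_zero]
  change ((‖(x : AddCircle p)‖ : ℝ) : AddCircle p) = x ∨ _ = -(x : AddCircle p)
  rw [AddCircle.norm_eq]
  rcases abs_choice (x - round (p⁻¹ * x) * p) with h | h <;> rw [h]
  · exact Or.inl hx
  · exact Or.inr (by rw [AddCircle.coe_neg, hx])

lemma norm_coe_eq_abs_of_abs_le_one {x : ℝ} (hx : |x| ≤ 1) : ‖(x : 𝕋)‖ = |x| :=
  (AddCircle.norm_coe_eq_abs_iff 2 two_ne_zero).mpr (by norm_num [hx])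

lemma norm_coe_two_mul_eq_tent {u : ℝ} (hu : u ∈ Icc (0 : ℝ) 1) :
    ‖((2 * u : ℝ) : 𝕋)‖ = tent u := by
  obtain ⟨hu0, hu1⟩ := hu
  rcases le_total u (1 / 2) with h | h
  · rw [norm_coe_eq_abs_of_abs_le_one (abs_le.mpr ⟨by linarith, by linarith⟩),
      abs_of_nonneg (by linarith), tent_of_le_half h]
  · rw [← sub_add_cancel (2 * u) 2, AddCircle.coe_add_period,
      norm_coe_eq_abs_of_abs_le_one (abs_le.mpr ⟨by linarith, by linarith⟩),
      abs_of_nonpos (by linarith), tent_of_half_le h]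
    ring

lemma semiconj_norm_tent : Semiconj (‖·‖ : 𝕋 → ℝ) (2 • ·) tent := by
  intro θ
  have hθ : ‖θ‖ ∈ Icc (0 : ℝ) 1 :=
    ⟨norm_nonneg θ, by simpa using AddCircle.norm_le_half_period 2 (x := θ) two_ne_zero⟩
  have h2 : ((2 * ‖θ‖ : ℝ) : 𝕋) = 2 • (‖θ‖ : 𝕋) := by
    rw [← AddCircle.coe_nsmul, nsmul_eq_mul, Nat.cast_ofNat]
  change ‖2 • θ‖ = tent ‖θ‖
  rw [← norm_coe_two_mul_eq_tent hθ, h2]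
  rcases AddCircle.coe_norm_eq_or_eq_neg θ with h | h <;> rw [h]
  rw [smul_neg, norm_neg]

lemma tent_iterate_eq_norm {u : ℝ} (hu : u ∈ Icc (0 : ℝ) 1) (n : ℕ) :
    tent^[n] u = ‖((2 ^ n * u : ℝ) : 𝕋)‖ := by
  have hu' : ‖(u : 𝕋)‖ = u := by
    rw [norm_coe_eq_abs_of_abs_le_one (abs_le.mpr ⟨by linarith [hu.1], hu.2⟩),
      abs_of_nonneg hu.1]
  conv_lhs => rw [← hu']
  rw [← (semiconj_norm_tent.iterate_right n) (u : 𝕋), smul_iterate]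
  change ‖(2 ^ n) • (u : 𝕋)‖ = _
  rw [← AddCircle.coe_nsmul, nsmul_eq_mul]
  norm_cast

lemma norm_coe_natCast_add (j : ℕ) {t : ℝ} (ht : t ∈ Icc (0 : ℝ) 1) :
    ‖((j + t : ℝ) : 𝕋)‖ = if Even j then t else 1 - t := by
  obtain ⟨ht0, ht1⟩ := ht
  obtain ⟨i, rfl | rfl⟩ := Nat.even_or_odd' j
  · rw [show ((2 * i : ℕ) : ℝ) + t = t + i • (2 : ℝ) by push_cast; ring, AddCircle.coe_add,
      AddCircle.coe_nsmul, AddCircle.coe_period, smul_zero, add_zero,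
      norm_coe_eq_abs_of_abs_le_one (abs_le.mpr ⟨by linarith, ht1⟩), abs_of_nonneg ht0,
      if_pos (even_two_mul i)]
  · rw [show ((2 * i + 1 : ℕ) : ℝ) + t = (t - 1) + (i + 1) • (2 : ℝ) by push_cast; ring,
      AddCircle.coe_add, AddCircle.coe_nsmul, AddCircle.coe_period, smul_zero, add_zero,
      norm_coe_eq_abs_of_abs_le_one (abs_le.mpr ⟨by linarith, by linarith⟩),
      abs_of_nonpos (by linarith), if_neg (Nat.not_even_iff_odd.mpr (odd_two_mul_add_one i))]
    ring

noncomputable def tentFixedPt (p j : ℕ) : ℝ :=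
  if Even j then j / (2 ^ p - 1) else (j + 1) / (2 ^ p + 1)

section tentFixedPt

variable {p : ℕ}

lemma two_pow_mul_tentFixedPt (hp : 1 ≤ p) (j : ℕ) :
    2 ^ p * tentFixedPt p j =
      if Even j then j + tentFixedPt p j else j + (1 - tentFixedPt p j) := by
  have h2 : (2 : ℝ) ≤ 2 ^ p := le_self_pow₀ one_le_two (by omega)
  unfold tentFixedPt
  split_ifs
  · field_simp [show (2 : ℝ) ^ p - 1 ≠ 0 by linarith]
    ring
  · field_simp
    ring

lemma tentFixedPt_mem_Icc (hp : 1 ≤ p) {j : ℕ} (hj : j < 2 ^ p) :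
    tentFixedPt p j ∈ Icc (0 : ℝ) 1 := by
  have h2 : (2 : ℝ) ≤ 2 ^ p := le_self_pow₀ one_le_two (by omega)
  have hj' : (j : ℝ) + 1 ≤ 2 ^ p := by exact_mod_cast hj
  unfold tentFixedPt
  split_ifs
  · exact ⟨div_nonneg (by positivity) (by linarith), (div_le_one (by linarith)).mpr (by linarith)⟩
  · exact ⟨by positivity, (div_le_one (by positivity)).mpr (by linarith)⟩

lemma floor_two_pow_mul_tentFixedPt (hp : 1 ≤ p) {j : ℕ} (hj : j < 2 ^ p) :
    ⌊2 ^ p * tentFixedPt p j⌋₊ = j := by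
  obtain ⟨hx0, hx1⟩ := tentFixedPt_mem_Icc hp hj
  rw [Nat.floor_eq_iff (by positivity), two_pow_mul_tentFixedPt hp]
  split_ifs with he
  · refine ⟨by linarith, ?_⟩
    -- `2 ^ p` is even, so an even `j < 2 ^ p` satisfies `j + 1 < 2 ^ p`
    have hj1 : j + 1 < 2 ^ p := by
      obtain ⟨i, rfl⟩ := he
      obtain ⟨m, rfl⟩ := Nat.exists_eq_add_of_le' hp
      rw [pow_succ] at hj ⊢
      omega
    have hj1' : (j : ℝ) + 1 < 2 ^ p := by exact_mod_cast hj1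
    unfold tentFixedPt
    rw [if_pos he]
    linarith [(div_lt_one (by linarith : (0 : ℝ) < 2 ^ p - 1)).mpr
      (by linarith : (j : ℝ) < 2 ^ p - 1)]
  · refine ⟨by linarith, ?_⟩
    unfold tentFixedPt
    rw [if_neg he]
    linarith [show 0 < ((j : ℝ) + 1) / (2 ^ p + 1) by positivity]

lemma tent_iterate_tentFixedPt (hp : 1 ≤ p) {j : ℕ} (hj : j < 2 ^ p) :
    tent^[p] (tentFixedPt p j) = tentFixedPt p j := by
  have hx := tentFixedPt_mem_Icc hp hj
  rw [tent_iterate_eq_norm hx, two_pow_mul_tentFixedPt hp]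
  split_ifs with he
  · rw [norm_coe_natCast_add j hx, if_pos he]
  · rw [norm_coe_natCast_add j ⟨by linarith [hx.2], by linarith [hx.1]⟩, if_neg he]
    ring

lemma eq_tentFixedPt_of_tent_iterate_eq (hp : 1 ≤ p) {u : ℝ} (hu : tent^[p] u = u) :
    ⌊2 ^ p * u⌋₊ < 2 ^ p ∧ u = tentFixedPt p ⌊2 ^ p * u⌋₊ := by
  have hu01 := mem_Icc_of_tent_iterate_eq hp hu
  have h2 : (2 : ℝ) ≤ 2 ^ p := le_self_pow₀ one_le_two (by omega)
  have hu1 : u < 1 := by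
    refine hu01.2.lt_of_ne ?_
    rintro rfl
    obtain ⟨m, rfl⟩ := Nat.exists_eq_add_of_le' hp
    rw [iterate_succ_apply, show tent 1 = 0 by norm_num [tent],
      iterate_fixed (by norm_num [tent] : tent 0 = 0)] at hu
    exact zero_ne_one hu
  set j := ⌊2 ^ p * u⌋₊
  have hprod : 0 ≤ 2 ^ p * u := mul_nonneg (by positivity) hu01.1
  have hjle : (j : ℝ) ≤ 2 ^ p * u := Nat.floor_le hprod
  have hjlt : 2 ^ p * u < j + 1 := Nat.lt_floor_add_one _
  refine ⟨(Nat.floor_lt hprod).mpr (by exact_mod_cast (by nlinarith : 2 ^ p * u < 2 ^ p)), ?_⟩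
  rw [tent_iterate_eq_norm hu01, ← add_sub_cancel (j : ℝ) (2 ^ p * u),
    norm_coe_natCast_add j ⟨by linarith, by linarith⟩] at hu
  unfold tentFixedPt
  split_ifs at hu ⊢
  · rw [eq_div_iff (by linarith)]
    linarith
  · rw [eq_div_iff (by linarith)]
    linarith

lemma setOf_tent_iterate_eq (hp : 1 ≤ p) :
    {u | tent^[p] u = u} = range (fun j : Fin (2 ^ p) => tentFixedPt p j) := by
  ext u
  constructor
  · intro hu
    obtain ⟨hj, hu⟩ := eq_tentFixedPt_of_tent_iterate_eq hp hu
    exact ⟨⟨_, hj⟩, hu.symm⟩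
  · rintro ⟨j, rfl⟩
    exact tent_iterate_tentFixedPt hp j.2

lemma injective_tentFixedPt (hp : 1 ≤ p) :
    Injective (fun j : Fin (2 ^ p) => tentFixedPt p j) := fun i j hij =>
  Fin.ext <| by
    rw [← floor_two_pow_mul_tentFixedPt hp i.2, ← floor_two_pow_mul_tentFixedPt hp j.2]
    exact congrArg _ (congrArg _ hij)

lemma ncard_setOf_tent_iterate_eq (hp : 1 ≤ p) : {u | tent^[p] u = u}.ncard = 2 ^ p := by
  rw [setOf_tent_iterate_eq hp, ncard_range_of_injective (injective_tentFixedPt hp),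
    Nat.card_eq_fintype_card, Fintype.card_fin]

lemma tent_iterate_tentFixedPt_one_ne {q : ℕ} (hq : 1 ≤ q) (hqp : q < p) :
    tent^[q] (tentFixedPt p 1) ≠ tentFixedPt p 1 := by
  have hx : tentFixedPt p 1 = 2 / (2 ^ p + 1) := by norm_num [tentFixedPt]
  have hq2 : (2 : ℝ) ≤ 2 ^ q := le_self_pow₀ one_le_two (by omega)
  have hqp' : (2 : ℝ) ^ (q + 1) ≤ 2 ^ p := pow_le_pow_right₀ one_le_two hqp
  have hpos : (0 : ℝ) < 2 / (2 ^ p + 1) := by positivity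
  have hle : 2 ^ q * (2 / (2 ^ p + 1)) ≤ (1 : ℝ) := by
    rw [mul_div_assoc', div_le_one (by positivity)]
    rw [pow_succ] at hqp'
    linarith
  rw [hx, tent_iterate_eq_norm ⟨hpos.le, by nlinarith⟩,
    norm_coe_eq_abs_of_abs_le_one (by rw [abs_of_pos (by positivity)]; exact hle),
    abs_of_pos (by positivity)]
  nlinarith

end tentFixedPt

lemma Function.Semiconj.iterate_apply_eq_iff {α β : Type*} {φ : α → β} {f : α → α} {g : β → β}
    (h : Semiconj φ f g) (hφ : Injective φ) (n : ℕ) (x : α) :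
    g^[n] (φ x) = φ x ↔ f^[n] x = x := by
  rw [← (h.iterate_right n).eq, hφ.eq_iff]

lemma Function.Semiconj.setOf_iterate_eq_eq_image {α β : Type*} {φ : α → β} {f : α → α}
    {g : β → β} (h : Semiconj φ f g) (hφ : Bijective φ) (n : ℕ) :
    {y | g^[n] y = y} = φ '' {x | f^[n] x = x} := by
  ext y
  obtain ⟨x, rfl⟩ := hφ.2 y
  exact (h.iterate_apply_eq_iff hφ.1 n x).trans
    (hφ.1.mem_set_image (s := {x | f^[n] x = x})).symm

/-- For `μ > 0` and `F x = μ - 2|x|`: every periodic point lies in `[-μ, μ]`, the `p`-th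
iterate has exactly `2^p` fixed points, and there is a point of minimal period `p`, for
every `p ≥ 1`. In particular `F` has periodic orbits of all periods and exponential
periodic orbit growth for every `μ > 0`. -/
theorem stmt_13 (μ : ℝ) (hμ : 0 < μ) (F : ℝ → ℝ) (hF : ∀ x, F x = μ - 2 * |x|) :
    (∀ p : ℕ, 1 ≤ p →
      (∀ x : ℝ, F^[p] x = x → x ∈ Set.Icc (-μ) μ) ∧
      ({x : ℝ | F^[p] x = x}.Finite ∧ {x : ℝ | F^[p] x = x}.ncard = 2 ^ p) ∧
      (∃ x : ℝ, F^[p] x = x ∧ ∀ q : ℕ, 1 ≤ q → q < p → F^[q] x ≠ x)) ∧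
    (∃ G : ℝ, 1 < G ∧
      {p : ℕ | G ^ p ≤ ({x : ℝ | F^[p] x = x}.ncard : ℝ)}.Infinite) := by
  set φ : ℝ → ℝ := fun u => μ * (2 * u - 1)
  have hφ : Bijective φ :=
    ⟨fun a b hab => by simpa [φ, hμ.ne'] using hab,
      fun x => ⟨(x / μ + 1) / 2, by simp only [φ]; field_simp; ring⟩⟩
  have hconj : Semiconj φ tent F := fun u => by
    simp only [φ, hF, tent, abs_mul, abs_of_pos hμ]
    ring
  have hfix := hconj.setOf_iterate_eq_eq_image hφ
  have hcard : ∀ p, 1 ≤ p → {x | F^[p] x = x}.ncard = 2 ^ p := fun p hp => by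
    rw [hfix, ncard_image_of_injective _ hφ.1, ncard_setOf_tent_iterate_eq hp]
  refine ⟨fun p hp => ⟨?_, ⟨?_, hcard p hp⟩, ?_⟩, 2, one_lt_two, ?_⟩
  · intro x hx
    obtain ⟨u, hu, rfl⟩ : x ∈ φ '' {u | tent^[p] u = u} := hfix p ▸ hx
    obtain ⟨hu0, hu1⟩ := mem_Icc_of_tent_iterate_eq hp hu
    constructor <;> nlinarith
  · rw [hfix, setOf_tent_iterate_eq hp]
    exact (finite_range _).image φ
  · refine ⟨φ (tentFixedPt p 1), ?_, fun q hq hqp => ?_⟩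
    · rw [hconj.iterate_apply_eq_iff hφ.1]
      exact tent_iterate_tentFixedPt hp (Nat.one_lt_two_pow_iff.mpr (by omega))
    · rw [Ne, hconj.iterate_apply_eq_iff hφ.1]
      exact tent_iterate_tentFixedPt_one_ne hq hqp
  · refine (Ici_infinite 1).mono fun p hp => ?_
    simp [hcard p hp]
end
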